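/- For any two rooted binary trees S and T with the same number n ≥ 1 of vertices, the chain distance satisfies C(S,T) ≤ n − 1. -/
import Mathlib


/-- Rooted binary trees with vertices labeled by `α`: each vertex has an optional
left child and an optional right child; `nil` denotes the absent (empty) tree. -/
inductive BT (α : Type) : Type
  | nil : BT α
  | node : BT α → α → BT α → BT α

namespace BT

variable {α : Type}

/-- The number of vertices of a tree. -/
def size : BT α → ℕ
  | nil => 0
  | node l _ r => size l + size r + 1

/-- The in-order (infix) traversal sequence of the labels of a tree:
left subtree first, then the root, then the right subtree. -/
def inorder : BT α → List α
  | nil => []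
  | node l x r => inorder l ++ x :: inorder r

/-- The number of vertices of the tree having a (non-null) right child. -/
def rightChildCount : BT α → ℕ
  | nil => 0
  | node l _ nil => rightChildCount l
  | node l _ (node rl y rr) => rightChildCount l + rightChildCount (node rl y rr) + 1

/-- The number of vertices of the tree having a (non-null) left child. -/
def leftChildCount : BT α → ℕ
  | nil => 0
  | node nil _ r => leftChildCount r
  | node (node ll y lr) _ r => leftChildCount (node ll y lr) + leftChildCount r + 1

/-- `L T`: the number of maximal left chains of `T`.  A left chain is a sequence of
vertices each linked to the next by a left-child pointer (a single vertex is a chain);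
a maximal left chain is one not contained in any other left chain.  Each maximal left
chain is uniquely determined by its topmost vertex, which is either the root of the
tree or a right child of some vertex; moreover the maximal left chain headed by the
root of a nonempty left subtree `l` merges with its parent, which yields the
recursion below. -/
def L : BT α → ℕ
  | nil => 0
  | node nil _ r => 1 + L r
  | node (node ll y lr) _ r => L (node ll y lr) + L r

/-- `R T`: the number of maximal right chains of `T` (mirror image of `L`). -/
def R : BT α → ℕ
  | nil => 0
  | node l _ nil => R l + 1
  | node l _ (node rl y rr) => R l + R (node rl y rr)

/-- The complete left chain on `n` vertices: the tree in which all `n` vertices are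
linked by left-child pointers. -/
def leftChain : ℕ → BT Unit
  | 0 => nil
  | n + 1 => node (leftChain n) () nil

/-- The complete right chain on `n` vertices: the tree in which all `n` vertices are
linked by right-child pointers. -/
def rightChain : ℕ → BT Unit
  | 0 => nil
  | n + 1 => node nil () (rightChain n)

/-- `SpliceL A w U V lv` captures the local effect of the direct chain rotation
`rot([u-v], w)` for a **left** chain `[u-v]`: here `U` is the subtree rooted at `u`
(`u` being the right child of `w`), `A` is the left subtree of `w` and `w` is its
label, `[u-v]` is the left chain going from `u` down (along left-child pointers) to
`v` inside `U`, `lv` is the former left subtree of `v`, and `V` is the tree replacing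
the subtree `node A w U` rooted at `w`: the vertex `u` takes the place of `w`, `w`
becomes the left child of `v`, and the former left subtree `lv` of `v` (if any)
becomes the right subtree of `w`.  The chain `[u-v]` is maximal iff `lv = nil`. -/
inductive SpliceL (A : BT α) (w : α) : BT α → BT α → BT α → Prop
  | base (lv rv : BT α) (v : α) :
      SpliceL A w (node lv v rv) (node (node A w lv) v rv) lv
  | step {lu lu' lv : BT α} (c : α) (ru : BT α) :
      SpliceL A w lu lu' lv → SpliceL A w (node lu c ru) (node lu' c ru) lv

/-- `SpliceR A w U V rv`: mirror image of `SpliceL`, i.e. the local effect of the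
direct chain rotation `rot([u-v], w)` for a **right** chain `[u-v]`: `U` is the
subtree rooted at `u` (`u` being the left child of `w`), `A` is the right subtree of
`w`, `[u-v]` is the right chain from `u` down to `v` inside `U`, `rv` is the former
right subtree of `v`, and `V` replaces the subtree `node U w A` rooted at `w`: `u`
takes the place of `w`, `w` becomes the right child of `v`, and the former right
subtree `rv` of `v` (if any) becomes the left subtree of `w`.
The chain `[u-v]` is maximal iff `rv = nil`. -/
inductive SpliceR (A : BT α) (w : α) : BT α → BT α → BT α → Prop
  | base (lv rv : BT α) (v : α) :
      SpliceR A w (node lv v rv) (node lv v (node rv w A)) rv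
  | step {ru ru' rv : BT α} (lu : BT α) (c : α) :
      SpliceR A w ru ru' rv → SpliceR A w (node lu c ru) (node lu c ru') rv

/-- `Ctx Y Y' W W'`: the tree `Y'` is obtained from `Y` by replacing one occurrence
of the subtree `W`, rooted at some vertex of `Y` (or `Y` itself), by the tree `W'`. -/
inductive Ctx : BT α → BT α → BT α → BT α → Prop
  | refl (W W' : BT α) : Ctx W W' W W'
  | left {l l' W W' : BT α} (x : α) (r : BT α) :
      Ctx l l' W W' → Ctx (node l x r) (node l' x r) W W'
  | right {r r' W W' : BT α} (l : BT α) (x : α) :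
      Ctx r r' W W' → Ctx (node l x r) (node l x r') W W'

/-- `Y'` is obtained from `Y` by one **direct** chain rotation `rot([u-v], w)`,
performed either on a left chain or (symmetrically) on a right chain, at an arbitrary
vertex `w` of `Y`. -/
def DirectRot (Y Y' : BT α) : Prop :=
  (∃ A w U V lv, SpliceL A w U V lv ∧ Ctx Y Y' (node A w U) V) ∨
  (∃ A w U V rv, SpliceR A w U V rv ∧ Ctx Y Y' (node U w A) V)

/-- `IChainL A w B X X'` captures the data of the inverse chain rotation
`rot(w, [u-v])` for a **left** chain `[u-v]`: `X` is the subtree rooted at `u`,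
`[u-v]` is the left chain from `u` down to `v` inside `X`, and the vertex `w` (with
label `w`, left subtree `A` and right subtree `B`) is the left child of `v`; `X'` is
`X` with the left child `w` of `v` replaced by `B` (the former right subtree of `w`
becomes the left subtree of `v`).  The rotation replaces the subtree `X` by
`node A w X'`: `w` takes the place of `u` and `u` becomes the right child of `w`. -/
inductive IChainL (A : BT α) (w : α) (B : BT α) : BT α → BT α → Prop
  | base (v : α) (rv : BT α) :
      IChainL A w B (node (node A w B) v rv) (node B v rv)
  | step {lu lu' : BT α} (c : α) (ru : BT α) :
      IChainL A w B lu lu' → IChainL A w B (node lu c ru) (node lu' c ru)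

/-- `IChainR B w A X X'`: mirror image of `IChainL`, for the inverse chain rotation
`rot(w, [u-v])` on a **right** chain `[u-v]`: `X` is the subtree rooted at `u`, the
vertex `w` (with left subtree `B` and right subtree `A`) is the right child of `v`;
`X'` is `X` with the right child `w` of `v` replaced by `B`.  The rotation replaces
`X` by `node X' w A`: `w` takes the place of `u` and `u` becomes the left child
of `w`. -/
inductive IChainR (B : BT α) (w : α) (A : BT α) : BT α → BT α → Prop
  | base (v : α) (lv : BT α) :
      IChainR B w A (node lv v (node B w A)) (node lv v B)
  | step {ru ru' : BT α} (lu : BT α) (c : α) :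
      IChainR B w A ru ru' → IChainR B w A (node lu c ru) (node lu c ru')

/-- `Y'` is obtained from `Y` by one **inverse** chain rotation `rot(w, [u-v])`,
performed either on a left chain or (symmetrically) on a right chain, anywhere
in `Y`. -/
def InvRot (Y Y' : BT α) : Prop :=
  (∃ A w B X X', IChainL A w B X X' ∧ Ctx Y Y' X (node A w X')) ∨
  (∃ B w A X X', IChainR B w A X X' ∧ Ctx Y Y' X (node X' w A))

/-- One chain rotation (c-rotation), direct or inverse. -/
def CStep (Y Y' : BT α) : Prop := DirectRot Y Y' ∨ InvRot Y Y'

/-- `ReachIn k S T`: `S` can be transformed into `T` by a sequence of exactly `k`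
chain rotations (each direct or inverse). -/
def ReachIn : ℕ → BT α → BT α → Prop
  | 0 => fun S T => S = T
  | k + 1 => fun S T => ∃ Y, CStep S Y ∧ ReachIn k Y T

/-- `DReachIn k S T`: `S` can be transformed into `T` by a sequence of exactly `k`
**direct** chain rotations. -/
def DReachIn : ℕ → BT α → BT α → Prop
  | 0 => fun S T => S = T
  | k + 1 => fun S T => ∃ Y, DirectRot S Y ∧ DReachIn k Y T

/-- The chain distance `C(S,T)`: the minimum number of chain rotations (direct or
inverse) needed to transform `S` into `T`. -/
noncomputable def chainDist (S T : BT α) : ℕ := sInf {k | ReachIn k S T}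

end BT


namespace BT

variable {α : Type}

theorem ctx_symm {Y Y' W W' : BT α} (h : Ctx Y Y' W W') : Ctx Y' Y W' W := by
  induction h with
  | refl => exact .refl _ _
  | left x r _ ih => exact .left x r ih
  | right l x _ ih => exact .right l x ih

theorem spliceL_inv {A : BT α} {w : α} {U V lv : BT α} (h : SpliceL A w U V lv) :
    IChainL A w lv V U := by
  induction h with
  | base lv rv v => exact .base v rv
  | step c ru _ ih => exact .step c ru ih

theorem spliceR_inv {A : BT α} {w : α} {U V rv : BT α} (h : SpliceR A w U V rv) :
    IChainR rv w A V U := by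
  induction h with
  | base lv rv v => exact .base v lv
  | step lu c _ ih => exact .step lu c ih

theorem invRot_of_directRot {Y Y' : BT α} (h : DirectRot Y Y') : InvRot Y' Y := by
  rcases h with ⟨A,w,U,V,lv,hs,hc⟩|⟨A,w,U,V,rv,hs,hc⟩
  · exact Or.inl ⟨A,w,lv,V,U, spliceL_inv hs, ctx_symm hc⟩
  · exact Or.inr ⟨rv,w,A,V,U, spliceR_inv hs, ctx_symm hc⟩

theorem dreach_to_reach : ∀ (k : ℕ) (S T : BT α), DReachIn k S T → ReachIn k S T := by
  intro k
  induction k with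
  | zero => intro S T h; exact h
  | succ k ih => rintro S T ⟨Y, hd, h⟩; exact ⟨Y, Or.inl hd, ih _ _ h⟩

theorem reach_snoc : ∀ (k : ℕ) (S Y T : BT α), ReachIn k S Y → CStep Y T → ReachIn (k+1) S T := by
  intro k
  induction k with
  | zero => intro S Y T h hs; exact ⟨T, h ▸ hs, rfl⟩
  | succ k ih => rintro S Y T ⟨Z, hz, h⟩ hs; exact ⟨Z, hz, ih _ _ _ h hs⟩

theorem dreach_rev : ∀ (k : ℕ) (S T : BT α), DReachIn k S T → ReachIn k T S := by
  intro k
  induction k with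
  | zero => intro S T h; exact h.symm
  | succ k ih =>
    rintro S T ⟨Y, hd, h⟩
    exact reach_snoc k T Y S (ih _ _ h) (Or.inr (invRot_of_directRot hd))

theorem reach_trans : ∀ (a : ℕ) (S Y : BT α), ReachIn a S Y →
    ∀ (b : ℕ) (T : BT α), ReachIn b Y T → ReachIn (a + b) S T := by
  intro a
  induction a with
  | zero => intro S Y h b T h2; rw [Nat.zero_add]; exact h ▸ h2
  | succ a ih =>
    rintro S Y ⟨Z, hz, h⟩ b T h2
    rw [Nat.succ_add]
    exact ⟨Z, hz, ih _ _ h b T h2⟩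

theorem R_pos : ∀ X : BT α, X ≠ nil → 1 ≤ R X := by
  intro X
  induction X with
  | nil => simp
  | node l x r ihl ihr =>
    intro _
    cases r with
    | nil => simp [R]
    | node rl y rr =>
      have := ihr (by simp)
      simp only [R]
      omega

theorem R_node (l : BT α) (x y : α) (r : BT α) :
    R (node l x r) = R l + R (node nil y r) := by
  cases r <;> simp [R]

theorem spliceR_exists (A : BT α) (w : α) :
    ∀ (r l : BT α) (x : α),
    ∃ vl vx vr, SpliceR A w (node l x r) (node vl vx vr) nil ∧
      size (node vl vx vr) = size (node l x r) + size A + 1 ∧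
      R (node vl vx vr) + 1 = R (node l x r) + R (node nil w A) := by
  intro r
  induction r with
  | nil =>
    intro l x
    refine ⟨l, x, node nil w A, .base l nil x, ?_, ?_⟩
    · simp [size]; omega
    · simp only [R]; omega
  | node rl y rr ihl ihr =>
    intro l x
    obtain ⟨vl, vx, vr, hs, hsz, hR⟩ := ihr rl y
    refine ⟨l, x, node vl vx vr, .step l x hs, ?_, ?_⟩
    · simp [size] at hsz ⊢; omega
    · simp only [R] at hR ⊢; omega

theorem directRot_right {r r' : BT α} (l : BT α) (x : α) (h : DirectRot r r') :
    DirectRot (node l x r) (node l x r') := by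
  rcases h with ⟨A,w,U,V,lv,hs,hc⟩|⟨A,w,U,V,rv,hs,hc⟩
  · exact Or.inl ⟨A,w,U,V,lv,hs, .right l x hc⟩
  · exact Or.inr ⟨A,w,U,V,rv,hs, .right l x hc⟩

theorem red : ∀ X : BT α, 2 ≤ R X → ∃ X', DirectRot X X' ∧ R X' + 1 = R X ∧ size X' = size X := by
  intro X
  induction X with
  | nil => intro h; simp [R] at h
  | node l x r ihl ihr =>
    cases l with
    | nil =>
      intro h
      cases r with
      | nil => simp [R] at h
      | node rl y rr =>
        have h2 : 2 ≤ R (node rl y rr) := by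
          simp only [R] at h; simpa [R] using h
        obtain ⟨r', hd, hR, hsz⟩ := ihr h2
        have hr' : r' ≠ nil := by
          intro hn; subst hn; simp [R] at hR; omega
        refine ⟨node nil x r', directRot_right nil x hd, ?_, ?_⟩
        · rw [R_node nil x x r', R_node nil x x (node rl y rr)]
          cases r' with
          | nil => exact absurd rfl hr'
          | node a b c => simp only [R] at hR ⊢; omega
        · simp [size] at hsz ⊢; omega
    | node ll ly lr =>
      intro _
      obtain ⟨vl, vx, vr, hs, hsz, hR⟩ := spliceR_exists r x lr ll ly
      refine ⟨node vl vx vr, Or.inr ⟨r, x, node ll ly lr, node vl vx vr, nil, hs, .refl _ _⟩, ?_, ?_⟩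
      · rw [R_node (node ll ly lr) x x r]; omega
      · simp [size] at hsz ⊢; omega

theorem eq_rightChain : ∀ X : BT Unit, R X = 1 → X = rightChain (size X) := by
  intro X
  induction X with
  | nil => intro h; simp [R] at h
  | node l x r ihl ihr =>
    intro h
    have hl : l = nil := by
      by_contra hn
      have h1 := R_pos l hn
      rw [R_node l x x r] at h
      have h2 : 1 ≤ R (node nil x r) := R_pos _ (by simp)
      omega
    subst hl
    cases r with
    | nil => simp [size, rightChain]
    | node rl y rr =>
      have hr : R (node rl y rr) = 1 := by simpa [R] using h
      have := ihr hr
      have hsz : size (node nil x (node rl y rr)) = size (node rl y rr) + 1 := by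
        simp [size]
      rw [hsz, rightChain]
      rw [← this]

theorem dreach_rightChain : ∀ (k : ℕ) (X : BT Unit), R X = k + 1 →
    DReachIn k X (rightChain (size X)) := by
  intro k
  induction k with
  | zero =>
    intro X h
    exact eq_rightChain X h
  | succ k ih =>
    intro X h
    obtain ⟨X', hd, hR, hsz⟩ := red X (by omega)
    exact ⟨X', hd, hsz ▸ ih X' (by omega)⟩

def mirror : BT α → BT α
  | nil => nil
  | node l x r => node (mirror r) x (mirror l)

theorem mirror_mirror : ∀ X : BT α, mirror (mirror X) = X := by
  intro X
  induction X with
  | nil => rfl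
  | node l x r ihl ihr => simp [mirror, ihl, ihr]

theorem size_mirror : ∀ X : BT α, size (mirror X) = size X := by
  intro X
  induction X with
  | nil => rfl
  | node l x r ihl ihr => simp [mirror, size, ihl, ihr]; omega

theorem R_mirror : ∀ X : BT α, R (mirror X) = L X := by
  intro X
  induction X with
  | nil => rfl
  | node l x r ihl ihr =>
    cases l with
    | nil => simp [mirror, R, L, ihr]; omega
    | node ll y lr =>
      show R (node (mirror r) x (node (mirror lr) y (mirror ll))) = _
      rw [show (node (mirror lr) y (mirror ll)) = mirror (node ll y lr) from rfl]
      cases hml : mirror (node ll y lr) with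
      | nil => simp [mirror] at hml
      | node a b c =>
        simp only [R, L, ← hml, ihl, ihr]
        omega

theorem mirror_rightChain : ∀ n : ℕ, mirror (rightChain n) = leftChain n := by
  intro n
  induction n with
  | zero => rfl
  | succ n ih => simp [rightChain, leftChain, mirror, ih]

theorem ctx_mirror {Y Y' W W' : BT α} (h : Ctx Y Y' W W') :
    Ctx (mirror Y) (mirror Y') (mirror W) (mirror W') := by
  induction h with
  | refl => exact .refl _ _
  | left x r _ ih => exact .right _ x ih
  | right l x _ ih => exact .left x _ ih

theorem spliceR_mirror {A : BT α} {w : α} {U V rv : BT α} (h : SpliceR A w U V rv) :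
    SpliceL (mirror A) w (mirror U) (mirror V) (mirror rv) := by
  induction h with
  | base lv rv v => exact .base (mirror rv) (mirror lv) v
  | step lu c _ ih => exact .step c (mirror lu) ih

theorem spliceL_mirror {A : BT α} {w : α} {U V lv : BT α} (h : SpliceL A w U V lv) :
    SpliceR (mirror A) w (mirror U) (mirror V) (mirror lv) := by
  induction h with
  | base lv rv v => exact .base (mirror rv) (mirror lv) v
  | step c ru _ ih => exact .step (mirror ru) c ih

theorem directRot_mirror {Y Y' : BT α} (h : DirectRot Y Y') :
    DirectRot (mirror Y) (mirror Y') := by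
  rcases h with ⟨A,w,U,V,lv,hs,hc⟩|⟨A,w,U,V,rv,hs,hc⟩
  · exact Or.inr ⟨mirror A, w, mirror U, mirror V, mirror lv, spliceL_mirror hs, ctx_mirror hc⟩
  · exact Or.inl ⟨mirror A, w, mirror U, mirror V, mirror rv, spliceR_mirror hs, ctx_mirror hc⟩

theorem dreach_mirror : ∀ (k : ℕ) (S T : BT α), DReachIn k S T →
    DReachIn k (mirror S) (mirror T) := by
  intro k
  induction k with
  | zero => intro S T h; exact congrArg mirror h
  | succ k ih => rintro S T ⟨Y, hd, h⟩; exact ⟨mirror Y, directRot_mirror hd, ih _ _ h⟩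

theorem dreach_leftChain (k : ℕ) (X : BT Unit) (h : L X = k + 1) :
    DReachIn k X (leftChain (size X)) := by
  have h1 : R (mirror X) = k + 1 := by rw [R_mirror]; exact h
  have h2 := dreach_rightChain k (mirror X) h1
  have h3 := dreach_mirror k _ _ h2
  rwa [mirror_mirror, size_mirror, mirror_rightChain] at h3

theorem LR_le : ∀ X : BT α, L X + R X ≤ size X + 1 := by
  intro X
  induction X with
  | nil => simp [L, R, size]
  | node l x r ihl ihr =>
    cases l <;> cases r <;> simp only [L, R, size] at ihl ihr ⊢ <;> omega

theorem L_pos : ∀ X : BT α, X ≠ nil → 1 ≤ L X := by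
  intro X hX
  have := R_pos (mirror X) (by cases X with | nil => exact absurd rfl hX | node l x r => simp [mirror])
  rwa [R_mirror] at this

end BT

open BT

/-- for any two rooted binary trees `S` and `T` with the same number
`n ≥ 1` of vertices, the chain distance satisfies `C(S,T) ≤ n − 1`. -/
theorem chainDist_le_n_sub_one (S T : BT Unit) (n : ℕ) (hn : 1 ≤ n)
    (hS : S.size = n) (hT : T.size = n) :
    chainDist S T ≤ n - 1 := by
  have hSn : S ≠ nil := by intro h; rw [h] at hS; simp [size] at hS; omega
  have hTn : T ≠ nil := by intro h; rw [h] at hT; simp [size] at hT; omega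
  have hRS := R_pos S hSn
  have hRT := R_pos T hTn
  have hLS := L_pos S hSn
  have hLT := L_pos T hTn
  have hlrS := LR_le S
  have hlrT := LR_le T
  rw [hS] at hlrS
  rw [hT] at hlrT
  -- path via right chain
  have p1 : ReachIn ((R S - 1) + (R T - 1)) S T := by
    have a1 := dreach_rightChain (R S - 1) S (by omega)
    have a2 := dreach_rightChain (R T - 1) T (by omega)
    rw [hS] at a1
    rw [hT] at a2
    exact reach_trans _ _ _ (dreach_to_reach _ _ _ a1) _ _ (dreach_rev _ _ _ a2)
  have p2 : ReachIn ((L S - 1) + (L T - 1)) S T := by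
    have a1 := dreach_leftChain (L S - 1) S (by omega)
    have a2 := dreach_leftChain (L T - 1) T (by omega)
    rw [hS] at a1
    rw [hT] at a2
    exact reach_trans _ _ _ (dreach_to_reach _ _ _ a1) _ _ (dreach_rev _ _ _ a2)
  have c1 : chainDist S T ≤ (R S - 1) + (R T - 1) := Nat.sInf_le p1
  have c2 : chainDist S T ≤ (L S - 1) + (L T - 1) := Nat.sInf_le p2
  omega
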